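/- Let ξ > 0, let M ≥ 1 be an integer, and let E satisfy 0 ≤ 2E ≤ (1+ξ)/(2+3ξ). Then the minimum of f_{M,ξ,ξ}(p) over all vectors p = (p_{m,n})_{m,n=0}^{M} satisfying p_{m,n} ≥ 0 for all m, n, ∑_{m,n=0}^{M} p_{m,n} = 1, and ∑_{m,n=0}^{M} (m+n) p_{m,n} ≤ 2E, is attained at the unique point given by p_{0,0} = 1−2E, p_{0,1} = p_{1,0} = E, and p_{m,n} = 0 whenever m+n ≥ 2. -/
import Mathlib


open Finset

/-- `T_ξ^{mm'} = ∑_{k=0}^{min(m,m')} C(m,k) C(m',k) ξ^{2k}/(1+ξ)^{m+m'}`. -/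
noncomputable def Tbi (ξ : ℝ) (m m' : ℕ) : ℝ :=
  ∑ k ∈ Finset.range (min m m' + 1),
    (m.choose k : ℝ) * (m'.choose k : ℝ) * ξ ^ (2 * k) / (1 + ξ) ^ (m + m')

/-- The objective function `f_{M,ξ,ξ'}` of the bidirectional teleportation optimization. -/
noncomputable def fBi (M : ℕ) (ξ ξ' : ℝ) (p : Fin (M + 1) → Fin (M + 1) → ℝ) : ℝ :=
  (1 / ((1 + ξ) * (1 + ξ'))) *
    ∑ m : Fin (M + 1), ∑ n : Fin (M + 1), ∑ m' : Fin (M + 1), ∑ n' : Fin (M + 1),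
      p m n * p m' n' * Tbi ξ (m : ℕ) (m' : ℕ) * Tbi ξ' (n : ℕ) (n' : ℕ)

/-- Feasibility: `p_{m,n} ≥ 0`, `∑ p_{m,n} = 1`, `∑ (m+n) p_{m,n} ≤ 2E`. -/
def FeasibleBi (M : ℕ) (E : ℝ) (p : Fin (M + 1) → Fin (M + 1) → ℝ) : Prop :=
  (∀ m n, 0 ≤ p m n) ∧ (∑ m : Fin (M + 1), ∑ n : Fin (M + 1), p m n = 1) ∧
    (∑ m : Fin (M + 1), ∑ n : Fin (M + 1), (((m : ℕ) : ℝ) + ((n : ℕ) : ℝ)) * p m n ≤ 2 * E)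

/-- The candidate optimal point: `p_{0,0} = 1 - 2E`, `p_{0,1} = p_{1,0} = E`,
and `p_{m,n} = 0` whenever `m + n ≥ 2`. -/
noncomputable def optBi (M : ℕ) (E : ℝ) : Fin (M + 1) → Fin (M + 1) → ℝ :=
  fun m n =>
    if (m : ℕ) = 0 ∧ (n : ℕ) = 0 then 1 - 2 * E
    else if (m : ℕ) + (n : ℕ) = 1 then E else 0

/-! ### Auxiliary definitions and lemmas -/

noncomputable def wks (ξ : ℝ) (m k : ℕ) : ℝ := (m.choose k : ℝ) * ξ ^ k / (1 + ξ) ^ m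

lemma wks_mul (ξ : ℝ) (m m' k : ℕ) :
    wks ξ m k * wks ξ m' k
      = (m.choose k : ℝ) * (m'.choose k : ℝ) * ξ ^ (2 * k) / (1 + ξ) ^ (m + m') := by
  unfold wks
  rw [div_mul_div_comm, ← pow_add, two_mul, pow_add]
  ring

lemma Tbi_eq_sum (ξ : ℝ) (N m m' : ℕ) (hm : m ≤ N) :
    Tbi ξ m m' = ∑ k ∈ Finset.range (N + 1), wks ξ m k * wks ξ m' k := by
  unfold Tbi
  rw [Finset.sum_subset (Finset.range_subset_range.2 (by omega : min m m' + 1 ≤ N + 1))]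
  · exact Finset.sum_congr rfl fun k _ => (wks_mul ξ m m' k).symm
  · intro k _ hk
    simp only [Finset.mem_range, not_lt] at hk
    rcases Nat.lt_or_ge m k with h | h
    · rw [Nat.choose_eq_zero_of_lt h]; simp
    · have : m' < k := by omega
      rw [Nat.choose_eq_zero_of_lt this]; simp

lemma Tbi_symm (ξ : ℝ) (m m' : ℕ) : Tbi ξ m m' = Tbi ξ m' m := by
  rw [Tbi_eq_sum ξ (max m m') m m' (le_max_left _ _),
      Tbi_eq_sum ξ (max m m') m' m (le_max_right _ _)]
  exact Finset.sum_congr rfl fun k _ => mul_comm _ _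

lemma Tbi_zero (ξ : ℝ) (m : ℕ) : Tbi ξ m 0 = 1 / (1 + ξ) ^ m := by
  unfold Tbi
  simp

lemma Tbi_one (ξ : ℝ) (m : ℕ) : Tbi ξ m 1 = (1 + m * ξ ^ 2) / (1 + ξ) ^ (m + 1) := by
  unfold Tbi
  cases m with
  | zero => norm_num
  | succ j =>
    have : min (j+1) 1 = 1 := by omega
    rw [this]
    rw [Finset.sum_range_succ, Finset.sum_range_one]
    push_cast
    ring_nf
    simp [Nat.choose_one_right]
    ring

lemma fin_one_val (M : ℕ) (hM : 1 ≤ M) : ((1 : Fin (M + 1)) : ℕ) = 1 := by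
  simp [Fin.val_one', Nat.mod_eq_of_lt (by omega : 1 < M + 1)]

lemma optBi_zero (M : ℕ) (E : ℝ) {m n : Fin (M + 1)} (h : 2 ≤ (m : ℕ) + (n : ℕ)) :
    optBi M E m n = 0 := by
  unfold optBi
  rw [if_neg (by omega), if_neg (by omega)]

lemma sum_optBi (M : ℕ) (hM : 1 ≤ M) (E : ℝ) (F : Fin (M + 1) → Fin (M + 1) → ℝ) :
    ∑ m : Fin (M + 1), ∑ n : Fin (M + 1), optBi M E m n * F m n
      = (1 - 2 * E) * F 0 0 + E * F 0 1 + E * F 1 0 := by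
  have h1 : ((1 : Fin (M + 1)) : ℕ) = 1 := fin_one_val M hM
  have h01 : (0 : Fin (M + 1)) ≠ 1 := by
    intro h; apply_fun (Fin.val) at h; rw [h1] at h; simp at h
  have e00 : optBi M E 0 0 = 1 - 2 * E := by simp [optBi]
  have e01 : optBi M E 0 1 = E := by
    unfold optBi; rw [Fin.val_zero, h1]; norm_num
  have e10 : optBi M E 1 0 = E := by
    unfold optBi; rw [Fin.val_zero, h1]; norm_num
  rw [Finset.sum_eq_add_of_mem (0 : Fin (M+1)) 1 (Finset.mem_univ _) (Finset.mem_univ _) h01]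
  · have hrow0 : ∑ n : Fin (M+1), optBi M E 0 n * F 0 n
        = (1 - 2*E) * F 0 0 + E * F 0 1 := by
      rw [Finset.sum_eq_add_of_mem (0 : Fin (M+1)) 1 (Finset.mem_univ _) (Finset.mem_univ _) h01]
      · rw [e00, e01]
      · intro c _ hc
        have : optBi M E 0 c = 0 := by
          apply optBi_zero
          have hc0 : (c : ℕ) ≠ 0 := fun h => hc.1 (Fin.ext (by simp [h]))
          have hc1 : (c : ℕ) ≠ 1 := fun h => hc.2 (Fin.ext (by rw [h, h1]))
          simp; omega
        rw [this, zero_mul]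
    have hrow1 : ∑ n : Fin (M+1), optBi M E 1 n * F 1 n = E * F 1 0 := by
      rw [Finset.sum_eq_single_of_mem (0 : Fin (M+1)) (Finset.mem_univ _), e10]
      intro c _ hc
      have : optBi M E 1 c = 0 := by
        apply optBi_zero
        have hc0 : (c : ℕ) ≠ 0 := fun h => hc (Fin.ext (by simp [h]))
        rw [h1]; omega
      rw [this, zero_mul]
    rw [hrow0, hrow1]
  · intro m _ hm
    apply Finset.sum_eq_zero
    intro n _
    have hm0 : (m : ℕ) ≠ 0 := fun h => hm.1 (Fin.ext (by simp [h]))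
    have hm1 : (m : ℕ) ≠ 1 := fun h => hm.2 (Fin.ext (by rw [h, h1]))
    rw [optBi_zero M E (by omega), zero_mul]

/-! ### The chord function -/

noncomputable def hfun (ξ E : ℝ) (t : ℕ) : ℝ :=
  (1 + ξ - 2*E*ξ + E*ξ^2*t) / (1+ξ)^(t+1)

section chord
variable {ξ E : ℝ} (hξ : 0 < ξ) (hE0 : 0 ≤ 2*E) (hE' : 2*E*(2+3*ξ) ≤ 1+ξ)
include hξ hE0 hE'

lemma hfun_step (t : ℕ) :
    hfun ξ E (t+1) - hfun ξ E t ≤ hfun ξ E (t+2) - hfun ξ E (t+1) := by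
  have hP : (0:ℝ) < 1 + ξ := by linarith
  have hPne : (1+ξ) ≠ 0 := ne_of_gt hP
  have key : hfun ξ E (t+2) - 2*hfun ξ E (t+1) + hfun ξ E t
      = ((1 + ξ - 2*E*ξ + E*ξ^2*t)*ξ^2 - 2*(E*ξ^2)*ξ) / ((1+ξ)^(t+1)*(1+ξ)^2) := by
    unfold hfun
    push_cast
    field_simp
    ring
  have hnum : 0 ≤ (1 + ξ - 2*E*ξ + E*ξ^2*t)*ξ^2 - 2*(E*ξ^2)*ξ := by
    have ht : (0:ℝ) ≤ t := Nat.cast_nonneg t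
    nlinarith [mul_nonneg (mul_nonneg hE0 (sq_nonneg ξ)) ht]
  have hden : (0:ℝ) < (1+ξ)^(t+1)*(1+ξ)^2 := by positivity
  nlinarith [div_nonneg hnum (le_of_lt hden)]

lemma hfun_mu_nonpos : hfun ξ E 1 - hfun ξ E 0 ≤ 0 := by
  have hP : (0:ℝ) < 1 + ξ := by linarith
  have hPne : (1+ξ) ≠ 0 := ne_of_gt hP
  have key : hfun ξ E 1 - hfun ξ E 0 = (E*ξ^2 - (1 + ξ - 2*E*ξ)*ξ) / ((1+ξ)^2) := by
    unfold hfun; push_cast; field_simp; ring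
  rw [key]
  apply div_nonpos_of_nonpos_of_nonneg
  · nlinarith
  · positivity

lemma hfun_chord (t : ℕ) :
    hfun ξ E 0 + t * (hfun ξ E 1 - hfun ξ E 0) ≤ hfun ξ E t := by
  have main : ∀ t : ℕ, (hfun ξ E 0 + t * (hfun ξ E 1 - hfun ξ E 0) ≤ hfun ξ E t)
      ∧ (hfun ξ E 1 - hfun ξ E 0 ≤ hfun ξ E (t+1) - hfun ξ E t) := by
    intro t
    induction t with
    | zero => constructor <;> simp
    | succ t ih =>
      obtain ⟨h1, h2⟩ := ih
      constructor
      · push_cast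
        linarith
      · have := hfun_step hξ hE0 hE' t
        linarith
  exact (main t).1

end chord

/-! ### The linear coefficient `Gval` -/

noncomputable def Gval (ξ E : ℝ) (m n : ℕ) : ℝ :=
  (1 - 2*E) * (Tbi ξ m 0 * Tbi ξ n 0) + E * (Tbi ξ m 0 * Tbi ξ n 1)
    + E * (Tbi ξ m 1 * Tbi ξ n 0)

lemma Gval_eq_hfun {ξ : ℝ} (hξ : 0 < ξ) (E : ℝ) (m n : ℕ) :
    Gval ξ E m n = hfun ξ E (m + n) := by
  have hP : (0:ℝ) < 1 + ξ := by linarith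
  have hPne : (1+ξ) ≠ 0 := ne_of_gt hP
  unfold Gval hfun
  rw [Tbi_zero, Tbi_zero, Tbi_one, Tbi_one]
  push_cast
  field_simp
  ring

/-! ### The bilinear form -/

noncomputable def Bform (M : ℕ) (ξ : ℝ) (r s : Fin (M + 1) → Fin (M + 1) → ℝ) : ℝ :=
  ∑ m : Fin (M + 1), ∑ n : Fin (M + 1), ∑ m' : Fin (M + 1), ∑ n' : Fin (M + 1),
    r m n * s m' n' * Tbi ξ (m : ℕ) (m' : ℕ) * Tbi ξ (n : ℕ) (n' : ℕ)

lemma fBi_eq_Bform (M : ℕ) (ξ : ℝ) (p : Fin (M + 1) → Fin (M + 1) → ℝ) :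
    fBi M ξ ξ p = (1 / ((1 + ξ) * (1 + ξ))) * Bform M ξ p p := rfl

lemma Bform_add_left (M : ℕ) (ξ : ℝ) (a b s : Fin (M + 1) → Fin (M + 1) → ℝ) :
    Bform M ξ (fun m n => a m n + b m n) s = Bform M ξ a s + Bform M ξ b s := by
  unfold Bform
  simp only [add_mul, Finset.sum_add_distrib]

lemma Bform_add_right (M : ℕ) (ξ : ℝ) (r a b : Fin (M + 1) → Fin (M + 1) → ℝ) :
    Bform M ξ r (fun m n => a m n + b m n) = Bform M ξ r a + Bform M ξ r b := by
  unfold Bform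
  simp only [mul_add, add_mul, Finset.sum_add_distrib]

lemma Bform_prod (M : ℕ) (ξ : ℝ) (r s : Fin (M + 1) → Fin (M + 1) → ℝ) :
    Bform M ξ r s = ∑ z : Fin (M+1) × Fin (M+1), ∑ z' : Fin (M+1) × Fin (M+1),
      r z.1 z.2 * s z'.1 z'.2 * Tbi ξ (z.1 : ℕ) (z'.1 : ℕ) * Tbi ξ (z.2 : ℕ) (z'.2 : ℕ) := by
  rw [Fintype.sum_prod_type]
  exact Finset.sum_congr rfl fun m _ => Finset.sum_congr rfl fun n _ => by
    rw [Fintype.sum_prod_type]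

lemma Bform_symm (M : ℕ) (ξ : ℝ) (r s : Fin (M + 1) → Fin (M + 1) → ℝ) :
    Bform M ξ r s = Bform M ξ s r := by
  rw [Bform_prod, Bform_prod, Finset.sum_comm]
  refine Finset.sum_congr rfl fun z _ => Finset.sum_congr rfl fun z' _ => ?_
  rw [Tbi_symm ξ (z'.1 : ℕ) (z.1 : ℕ), Tbi_symm ξ (z'.2 : ℕ) (z.2 : ℕ)]
  ring

lemma Bform_sq (M : ℕ) (ξ : ℝ) (d : Fin (M + 1) → Fin (M + 1) → ℝ) :
    Bform M ξ d d = ∑ k : Fin (M+1), ∑ l : Fin (M+1),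
      (∑ m : Fin (M+1), ∑ n : Fin (M+1), d m n * wks ξ (m:ℕ) (k:ℕ) * wks ξ (n:ℕ) (l:ℕ))^2 := by
  have hT : ∀ m m' : Fin (M+1), Tbi ξ (m:ℕ) (m':ℕ)
      = ∑ k : Fin (M+1), wks ξ (m:ℕ) (k:ℕ) * wks ξ (m':ℕ) (k:ℕ) := by
    intro m m'
    rw [Tbi_eq_sum ξ M (m:ℕ) (m':ℕ) (by omega : (m:ℕ) ≤ M)]
    rw [← Fin.sum_univ_eq_sum_range (fun k => wks ξ (m:ℕ) k * wks ξ (m':ℕ) k) (M+1)]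
  set F : (Fin (M+1) × Fin (M+1)) → (Fin (M+1) × Fin (M+1)) → ℝ :=
    fun z y => d z.1 z.2 * wks ξ (z.1 : ℕ) (y.1 : ℕ) * wks ξ (z.2 : ℕ) (y.2 : ℕ) with hF
  have step1 : Bform M ξ d d = ∑ z : Fin (M+1) × Fin (M+1), ∑ z' : Fin (M+1) × Fin (M+1),
      ∑ y : Fin (M+1) × Fin (M+1), F z y * F z' y := by
    rw [Bform_prod]
    refine Finset.sum_congr rfl fun z _ => Finset.sum_congr rfl fun z' _ => ?_
    rw [hT z.1 z'.1, hT z.2 z'.2, mul_assoc]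
    rw [Finset.sum_mul_sum]
    rw [← Fintype.sum_prod_type']
    rw [Finset.mul_sum]
    exact Finset.sum_congr rfl fun y _ => by simp only [hF]; ring
  rw [step1]
  have step2 : (∑ z : Fin (M+1) × Fin (M+1), ∑ z' : Fin (M+1) × Fin (M+1),
      ∑ y : Fin (M+1) × Fin (M+1), F z y * F z' y)
      = ∑ y : Fin (M+1) × Fin (M+1), (∑ z : Fin (M+1) × Fin (M+1), F z y)^2 := by
    have : ∀ z : Fin (M+1) × Fin (M+1), (∑ z' : Fin (M+1) × Fin (M+1),
        ∑ y : Fin (M+1) × Fin (M+1), F z y * F z' y)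
        = ∑ y : Fin (M+1) × Fin (M+1), ∑ z' : Fin (M+1) × Fin (M+1), F z y * F z' y :=
      fun z => Finset.sum_comm
    rw [Finset.sum_congr rfl (fun z _ => this z), Finset.sum_comm]
    refine Finset.sum_congr rfl fun y _ => ?_
    rw [sq, Finset.sum_mul_sum]
  rw [step2, Fintype.sum_prod_type]
  exact Finset.sum_congr rfl fun k _ => Finset.sum_congr rfl fun l _ => by
    rw [← Fintype.sum_prod_type']

lemma Bform_opt_right (M : ℕ) (hM : 1 ≤ M) (ξ E : ℝ) (d : Fin (M + 1) → Fin (M + 1) → ℝ) :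
    Bform M ξ d (optBi M E)
      = ∑ m : Fin (M+1), ∑ n : Fin (M+1), d m n * Gval ξ E (m:ℕ) (n:ℕ) := by
  unfold Bform
  refine Finset.sum_congr rfl fun m _ => Finset.sum_congr rfl fun n _ => ?_
  have h1 : (∑ m' : Fin (M+1), ∑ n' : Fin (M+1),
      d m n * optBi M E m' n' * Tbi ξ (m:ℕ) (m':ℕ) * Tbi ξ (n:ℕ) (n':ℕ))
      = ∑ m' : Fin (M+1), ∑ n' : Fin (M+1),
        optBi M E m' n' * (d m n * (Tbi ξ (m:ℕ) (m':ℕ) * Tbi ξ (n:ℕ) (n':ℕ))) :=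
    Finset.sum_congr rfl fun m' _ => Finset.sum_congr rfl fun n' _ => by ring
  rw [h1, sum_optBi M hM E (fun m' n' => d m n * (Tbi ξ (m:ℕ) (m':ℕ) * Tbi ξ (n:ℕ) (n':ℕ)))]
  simp only [Fin.val_zero, fin_one_val M hM]
  unfold Gval
  ring

lemma quad_zero_imp (M : ℕ) {ξ : ℝ} (hξ : 0 < ξ)
    (d : Fin (M + 1) → Fin (M + 1) → ℝ)
    (hS : ∀ k l : Fin (M+1),
      (∑ m : Fin (M+1), ∑ n : Fin (M+1), d m n * wks ξ (m:ℕ) (k:ℕ) * wks ξ (n:ℕ) (l:ℕ)) = 0) :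
    ∀ m n, d m n = 0 := by
  have hwne : ∀ j : Fin (M+1), wks ξ (j:ℕ) (j:ℕ) ≠ 0 := by
    intro j
    unfold wks
    rw [Nat.choose_self]
    push_cast
    positivity
  have hwlt : ∀ (a b : Fin (M+1)), (a:ℕ) < (b:ℕ) → wks ξ (a:ℕ) (b:ℕ) = 0 := by
    intro a b h
    unfold wks
    rw [Nat.choose_eq_zero_of_lt h]
    simp
  have main : ∀ a : ℕ, ∀ m : Fin (M+1), M - (m:ℕ) < a → ∀ n, d m n = 0 := by
    intro a
    induction a with
    | zero => intro m hm; omega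
    | succ a iha =>
      intro m hm
      have rows : ∀ m' : Fin (M+1), (m:ℕ) < (m':ℕ) → ∀ n', d m' n' = 0 := by
        intro m' h n'
        exact iha m' (by omega) n'
      have inner : ∀ b : ℕ, ∀ n : Fin (M+1), M - (n:ℕ) < b → d m n = 0 := by
        intro b
        induction b with
        | zero => intro n hn; omega
        | succ b ihb =>
          intro n hn
          have cols : ∀ n' : Fin (M+1), (n:ℕ) < (n':ℕ) → d m n' = 0 :=
            fun n' h => ihb n' (by omega)
          have h0 := hS m n
          have hred : (∑ m' : Fin (M+1), ∑ n' : Fin (M+1),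
              d m' n' * wks ξ (m':ℕ) (m:ℕ) * wks ξ (n':ℕ) (n:ℕ))
              = d m n * wks ξ (m:ℕ) (m:ℕ) * wks ξ (n:ℕ) (n:ℕ) := by
            rw [Finset.sum_eq_single_of_mem m (Finset.mem_univ _)]
            · rw [Finset.sum_eq_single_of_mem n (Finset.mem_univ _)]
              intro n' _ hn'
              rcases Nat.lt_or_ge (n':ℕ) (n:ℕ) with h | h
              · rw [hwlt n' n h, mul_zero]
              · have : (n:ℕ) < (n':ℕ) := by
                  rcases Nat.eq_or_lt_of_le h with h' | h'
                  · exact absurd (Fin.ext h'.symm) hn'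
                  · exact h'
                rw [cols n' this, zero_mul, zero_mul]
            · intro m' _ hm'
              apply Finset.sum_eq_zero
              intro n' _
              rcases Nat.lt_or_ge (m':ℕ) (m:ℕ) with h | h
              · rw [hwlt m' m h, mul_zero, zero_mul]
              · have : (m:ℕ) < (m':ℕ) := by
                  rcases Nat.eq_or_lt_of_le h with h' | h'
                  · exact absurd (Fin.ext h'.symm) hm'
                  · exact h'
                rw [rows m' this, zero_mul, zero_mul]
          rw [hred] at h0
          rcases mul_eq_zero.1 h0 with h | h
          · rcases mul_eq_zero.1 h with h | h
            · exact h
            · exact absurd h (hwne m)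
          · exact absurd h (hwne n)
      exact fun n => inner (M - (n:ℕ) + 1) n (by omega)
  exact fun m n => main (M - (m:ℕ) + 1) m (by omega) n

/-! ### Main theorem -/

theorem bidirectional_optimal_ineq_constraint (ξ E : ℝ) (M : ℕ) (hξ : 0 < ξ)
    (hM : 1 ≤ M) (hE0 : 0 ≤ 2 * E) (hE : 2 * E ≤ (1 + ξ) / (2 + 3 * ξ)) :
    FeasibleBi M E (optBi M E) ∧
      ∀ p : Fin (M + 1) → Fin (M + 1) → ℝ, FeasibleBi M E p →
        fBi M ξ ξ (optBi M E) ≤ fBi M ξ ξ p ∧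
          (fBi M ξ ξ p = fBi M ξ ξ (optBi M E) → p = optBi M E) := by
  have hP : (0:ℝ) < 1 + ξ := by linarith
  have h23 : (0:ℝ) < 2 + 3*ξ := by linarith
  have hE' : 2*E*(2+3*ξ) ≤ 1+ξ := by
    have := (le_div_iff₀ h23).1 hE
    linarith
  have hEnn : 0 ≤ E := by linarith
  have h2E1 : 2*E ≤ 1 := by nlinarith
  have h1 : ((1 : Fin (M + 1)) : ℕ) = 1 := fin_one_val M hM
  -- the energy sum of optBi
  have hsum1 : ∑ m : Fin (M + 1), ∑ n : Fin (M + 1), optBi M E m n = 1 := by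
    have h := sum_optBi M hM E (fun _ _ => (1:ℝ))
    simp only [mul_one] at h
    rw [h]; ring
  have hsumE : ∑ m : Fin (M + 1), ∑ n : Fin (M + 1),
      (((m : ℕ) : ℝ) + ((n : ℕ) : ℝ)) * optBi M E m n = 2 * E := by
    have hcomm : (∑ m : Fin (M + 1), ∑ n : Fin (M + 1),
        (((m : ℕ) : ℝ) + ((n : ℕ) : ℝ)) * optBi M E m n)
        = ∑ m : Fin (M + 1), ∑ n : Fin (M + 1),
          optBi M E m n * (((m : ℕ) : ℝ) + ((n : ℕ) : ℝ)) :=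
      Finset.sum_congr rfl fun m _ => Finset.sum_congr rfl fun n _ => mul_comm _ _
    rw [hcomm, sum_optBi M hM E (fun m n => (((m : ℕ) : ℝ) + ((n : ℕ) : ℝ)))]
    simp only [Fin.val_zero, h1]
    push_cast
    ring
  have hfeas : FeasibleBi M E (optBi M E) := by
    refine ⟨?_, hsum1, by rw [hsumE]⟩
    intro m n
    unfold optBi
    split_ifs <;> linarith
  refine ⟨hfeas, ?_⟩
  intro p hp
  obtain ⟨hpnn, hpsum, hpen⟩ := hp
  -- the decomposition
  set d : Fin (M + 1) → Fin (M + 1) → ℝ := fun m n => p m n - optBi M E m n with hd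
  have hpd : p = fun m n => optBi M E m n + d m n := by
    funext m n; simp [hd]
  set Cross : ℝ := ∑ m : Fin (M+1), ∑ n : Fin (M+1), d m n * Gval ξ E (m:ℕ) (n:ℕ) with hCross
  set Q : ℝ := Bform M ξ d d with hQ
  have hBp : Bform M ξ p p = Bform M ξ (optBi M E) (optBi M E) + 2 * Cross + Q := by
    calc Bform M ξ p p
        = Bform M ξ (fun m n => optBi M E m n + d m n) (fun m n => optBi M E m n + d m n) := by
          rw [← hpd]
      _ = Bform M ξ (optBi M E) (optBi M E) + Bform M ξ (optBi M E) d
            + (Bform M ξ d (optBi M E) + Bform M ξ d d) := by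
          rw [Bform_add_left, Bform_add_right, Bform_add_right]
      _ = Bform M ξ (optBi M E) (optBi M E) + 2 * Cross + Q := by
          rw [Bform_symm M ξ (optBi M E) d, Bform_opt_right M hM ξ E d, ← hCross, ← hQ]
          ring
  -- Cross ≥ 0
  set α : ℝ := hfun ξ E 0 with hα
  set β : ℝ := hfun ξ E 1 - hfun ξ E 0 with hβ
  have hβ0 : β ≤ 0 := hfun_mu_nonpos hξ hE0 hE'
  have hGbound : ∀ m n : ℕ, α + β * ((m:ℝ) + (n:ℝ)) ≤ Gval ξ E m n := by
    intro m n
    rw [Gval_eq_hfun hξ E m n]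
    have := hfun_chord hξ hE0 hE' (m + n)
    push_cast at this
    rw [hα, hβ]
    linarith
  have hLinOpt : (∑ m : Fin (M+1), ∑ n : Fin (M+1),
      optBi M E m n * Gval ξ E (m:ℕ) (n:ℕ)) = α + β * (2*E) := by
    rw [sum_optBi M hM E (fun m n => Gval ξ E (m:ℕ) (n:ℕ))]
    simp only [Fin.val_zero, h1]
    rw [Gval_eq_hfun hξ E 0 0, Gval_eq_hfun hξ E 0 1, Gval_eq_hfun hξ E 1 0]
    norm_num [hα, hβ]
    ring
  have hLinP : α + β * (2*E) ≤ ∑ m : Fin (M+1), ∑ n : Fin (M+1),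
      p m n * Gval ξ E (m:ℕ) (n:ℕ) := by
    have step1 : (∑ m : Fin (M+1), ∑ n : Fin (M+1),
        p m n * (α + β * (((m:ℕ):ℝ) + ((n:ℕ):ℝ))))
        ≤ ∑ m : Fin (M+1), ∑ n : Fin (M+1), p m n * Gval ξ E (m:ℕ) (n:ℕ) := by
      refine Finset.sum_le_sum fun m _ => Finset.sum_le_sum fun n _ => ?_
      exact mul_le_mul_of_nonneg_left (hGbound (m:ℕ) (n:ℕ)) (hpnn m n)
    have step2 : (∑ m : Fin (M+1), ∑ n : Fin (M+1),
        p m n * (α + β * (((m:ℕ):ℝ) + ((n:ℕ):ℝ))))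
        = α * (∑ m : Fin (M+1), ∑ n : Fin (M+1), p m n)
          + β * (∑ m : Fin (M+1), ∑ n : Fin (M+1), (((m:ℕ):ℝ) + ((n:ℕ):ℝ)) * p m n) := by
      rw [Finset.mul_sum, Finset.mul_sum, ← Finset.sum_add_distrib]
      refine Finset.sum_congr rfl fun m _ => ?_
      rw [Finset.mul_sum, Finset.mul_sum, ← Finset.sum_add_distrib]
      refine Finset.sum_congr rfl fun n _ => ?_
      ring
    have step3 : α * (∑ m : Fin (M+1), ∑ n : Fin (M+1), p m n)
          + β * (∑ m : Fin (M+1), ∑ n : Fin (M+1), (((m:ℕ):ℝ) + ((n:ℕ):ℝ)) * p m n)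
        ≥ α + β * (2*E) := by
      rw [hpsum]
      have := mul_le_mul_of_nonpos_left hpen hβ0
      linarith
    linarith
  have hCross0 : 0 ≤ Cross := by
    have : Cross = (∑ m : Fin (M+1), ∑ n : Fin (M+1), p m n * Gval ξ E (m:ℕ) (n:ℕ))
        - ∑ m : Fin (M+1), ∑ n : Fin (M+1), optBi M E m n * Gval ξ E (m:ℕ) (n:ℕ) := by
      rw [hCross, ← Finset.sum_sub_distrib]
      refine Finset.sum_congr rfl fun m _ => ?_
      rw [← Finset.sum_sub_distrib]
      refine Finset.sum_congr rfl fun n _ => ?_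
      simp [hd]; ring
    rw [this, hLinOpt]
    linarith
  -- Q ≥ 0
  have hQ0 : 0 ≤ Q := by
    rw [hQ, Bform_sq]
    refine Finset.sum_nonneg fun k _ => Finset.sum_nonneg fun l _ => sq_nonneg _
  have hc : (0:ℝ) < 1 / ((1 + ξ) * (1 + ξ)) := by positivity
  constructor
  · rw [fBi_eq_Bform, fBi_eq_Bform, hBp]
    have h2 : Bform M ξ (optBi M E) (optBi M E)
        ≤ Bform M ξ (optBi M E) (optBi M E) + 2 * Cross + Q := by linarith
    exact mul_le_mul_of_nonneg_left h2 (le_of_lt hc)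
  · intro heq
    rw [fBi_eq_Bform, fBi_eq_Bform, hBp] at heq
    have hcc : (0:ℝ) ≠ 1 / ((1 + ξ) * (1 + ξ)) := ne_of_lt hc
    have h3 : 2 * Cross + Q = 0 := by
      have := mul_left_cancel₀ (ne_of_gt hc) heq
      linarith
    have hQz : Q = 0 := by linarith
    have hSz : ∀ k l : Fin (M+1),
        (∑ m : Fin (M+1), ∑ n : Fin (M+1),
          d m n * wks ξ (m:ℕ) (k:ℕ) * wks ξ (n:ℕ) (l:ℕ)) = 0 := by
      rw [hQ, Bform_sq] at hQz
      intro k l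
      have hk := (Finset.sum_eq_zero_iff_of_nonneg
        (fun k _ => Finset.sum_nonneg fun l _ => sq_nonneg _)).1 hQz k (Finset.mem_univ _)
      have hl := (Finset.sum_eq_zero_iff_of_nonneg
        (fun l _ => sq_nonneg _)).1 hk l (Finset.mem_univ _)
      exact pow_eq_zero_iff (by norm_num) |>.1 hl
    have hdz := quad_zero_imp M hξ d hSz
    funext m n
    have := hdz m n
    simp [hd] at this
    linarith
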